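/- arXiv:1410.0715 — 4 statements merged into one kernel-verified Lean document; each statement's English description precedes it below -/
import Mathlib

section
/- Let X be a barreled locally convex topological vector space and Y a complete Hausdorff locally convex space, and let {F_t : X → Y}_{t∈J} be continuous linear maps indexed by an open interval J such that for every x ∈ X the map t ↦ F_t(x) is smooth. Then for each n and each compact K ⊂ J, the family of n-th derivative maps {F_t^{(n)} : X → Y}_{t∈K} is equicontinuous, and each F_t^{(n)} is a continuous linear map. -/
open Filter Topology

/-!
Both claims are instances of the Banach–Steinhaus theorem for a barrelled domain. The
`(n+1)`-st derivative at `t` is the pointwise limit of the difference quotients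
`h⁻¹ • (D n (t + h) - D n t)`, which are continuous linear maps by induction, so it is a
continuous linear map. For fixed `x`, the curve `t ↦ D n t x` is continuous, because it is
differentiable, so its image of a compact `K` is bounded; pointwise boundedness then gives
equicontinuity.
-/

section

variable {𝕜 E : Type*} [NormedField 𝕜] [AddCommGroup E] [Module 𝕜 E] [TopologicalSpace E]
  [IsTopologicalAddGroup E] [ContinuousSMul 𝕜 E]

theorem continuousAt_of_tendsto_slope_zero {f : 𝕜 → E} {t : 𝕜} {e : E}
    (hslope : Tendsto (fun h : 𝕜 => h⁻¹ • (f (t + h) - f t)) (𝓝[≠] 0) (𝓝 e)) :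
    ContinuousAt f t := by
  have hincr : Tendsto (fun h : 𝕜 => f t + h • (h⁻¹ • (f (t + h) - f t))) (𝓝[≠] 0)
      (𝓝 (f t + (0 : 𝕜) • e)) :=
    tendsto_const_nhds.add ((tendsto_id.mono_left nhdsWithin_le_nhds).smul hslope)
  have hshift : ContinuousAt (fun h : 𝕜 => f (t + h)) 0 := by
    rw [← continuousWithinAt_compl_self, ContinuousWithinAt, add_zero]
    rw [zero_smul, add_zero] at hincr
    refine hincr.congr' ?_
    filter_upwards [self_mem_nhdsWithin] with h hh
    rw [smul_inv_smul₀ hh, add_sub_cancel]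
  simpa [Function.comp_def] using
    hshift.comp_of_eq (continuousAt_id.sub continuousAt_const) (sub_self t)

end

section

variable {𝕜 X Y : Type*} [NontriviallyNormedField 𝕜]
  [AddCommGroup X] [Module 𝕜 X] [UniformSpace X] [IsUniformAddGroup X] [ContinuousSMul 𝕜 X]
  [BarrelledSpace 𝕜 X]
  [AddCommGroup Y] [Module 𝕜 Y] [UniformSpace Y] [IsUniformAddGroup Y] [ContinuousSMul 𝕜 Y]
  [PolynormableSpace 𝕜 Y]

theorem exists_continuousLinearMap_of_tendsto_slope_zero [T2Space Y]
    {L : 𝕜 → X →L[𝕜] Y} {d : 𝕜 → X → Y} {d' : X → Y} {t : 𝕜}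
    (hLd : ∀ᶠ s in 𝓝 t, ⇑(L s) = d s)
    (hd : ∀ x, Tendsto (fun h : 𝕜 => h⁻¹ • (d (t + h) x - d t x)) (𝓝[≠] 0) (𝓝 (d' x))) :
    ∃ M : X →L[𝕜] Y, ⇑M = d' := by
  have hshift : ∀ᶠ h in 𝓝[≠] (0 : 𝕜), ⇑(L (t + h)) = d (t + h) :=
    nhdsWithin_le_nhds <| (continuous_const_add t).tendsto' 0 t (add_zero t) |>.eventually hLd
  have hslope : Tendsto (fun h x => (h⁻¹ • (L (t + h) - L t)) x) (𝓝[≠] 0) (𝓝 d') := by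
    refine tendsto_pi_nhds.2 fun x => (hd x).congr' ?_
    filter_upwards [hshift] with h hh
    simp [hh, hLd.self_of_nhds]
  exact ⟨continuousLinearMapOfTendsto _ hslope, rfl⟩

theorem equicontinuous_of_continuousOn_apply {T : Type*} [TopologicalSpace T] {K : Set T}
    (hK : IsCompact K) {L : T → X →L[𝕜] Y} (hL : ∀ x, ContinuousOn (fun t => L t x) K) :
    Equicontinuous fun t : K => ⇑(L t) := by
  refine (PolynormableSpace.banach_steinhaus (𝓕 := fun t : K => L t) fun x => ?_).equicontinuous
  rw [← Set.image_eq_range (fun t => L t x) K]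
  exact (hK.image_of_continuousOn (hL x)).isVonNBounded 𝕜

end

theorem stmt1_general {X Y : Type*}
    [AddCommGroup X] [Module ℝ X] [TopologicalSpace X] [IsTopologicalAddGroup X]
    [ContinuousSMul ℝ X] [BarrelledSpace ℝ X]
    [AddCommGroup Y] [Module ℝ Y] [UniformSpace Y] [IsUniformAddGroup Y]
    [ContinuousSMul ℝ Y] [LocallyConvexSpace ℝ Y] [T2Space Y]
    (J : Set ℝ) (hJopen : IsOpen J)
    (F : ℝ → X →L[ℝ] Y)
    (D : ℕ → ℝ → X → Y)
    (hD0 : ∀ t x, D 0 t x = F t x)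
    (hDderiv : ∀ n : ℕ, ∀ t ∈ J, ∀ x : X,
      Tendsto (fun h : ℝ => h⁻¹ • (D n (t + h) x - D n t x))
        (nhdsWithin 0 {(0 : ℝ)}ᶜ) (nhds (D (n + 1) t x))) :
    ∀ n : ℕ,
      (∀ t ∈ J, ∃ L : X →L[ℝ] Y, ∀ x : X, L x = D n t x) ∧
      (∀ K : Set ℝ, K ⊆ J → IsCompact K →
        Equicontinuous (fun t : K => D n t.1)) := by
  -- the uniformity of the topological group `X`, needed to state Banach–Steinhaus
  let : UniformSpace X := IsTopologicalAddGroup.rightUniformSpace X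
  have : IsUniformAddGroup X := isUniformAddGroup_of_addCommGroup
  have eventually_eq_of_forall_mem {L : ℝ → X →L[ℝ] Y} {n : ℕ}
      (hL : ∀ t ∈ J, ∀ x, L t x = D n t x) (t : ℝ) (ht : t ∈ J) :
      ∀ᶠ s in 𝓝 t, ⇑(L s) = D n s := by
    filter_upwards [hJopen.mem_nhds ht] with s hs using funext (hL s hs)
  have hlin : ∀ n, ∀ t ∈ J, ∃ L : X →L[ℝ] Y, ∀ x, L x = D n t x := by
    intro n
    induction n with
    | zero => exact fun t _ => ⟨F t, fun x => (hD0 t x).symm⟩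
    | succ n ih =>
      choose! L hL using ih
      intro t ht
      obtain ⟨M, hM⟩ := exists_continuousLinearMap_of_tendsto_slope_zero
        (eventually_eq_of_forall_mem hL t ht) (hDderiv n t ht)
      exact ⟨M, congrFun hM⟩
  refine fun n => ⟨hlin n, fun K hKJ hK => ?_⟩
  choose! L hL using hlin n
  have hcont : ∀ x, ContinuousOn (fun s => L s x) K := fun x t ht =>
    (continuousAt_of_tendsto_slope_zero (hDderiv n t (hKJ ht) x)).congr
      ((eventually_eq_of_forall_mem hL t (hKJ ht)).mono fun s hs => (congrFun hs x).symm)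
      |>.continuousWithinAt
  have hDL : (fun t : K => D n t.1) = fun t : K => ⇑(L t) :=
    funext fun t => funext fun x => (hL t (hKJ t.2) x).symm
  exact hDL ▸ equicontinuous_of_continuousOn_apply hK hcont

/-- Let `X` be a barreled locally convex space, `Y` a complete Hausdorff locally
convex space, and `{F_t : X → Y}` continuous linear maps indexed by an open interval `J` such
that for every `x` the map `t ↦ F_t x` is smooth (all iterated derivatives `D n t x` exist as
limits of difference quotients, for `t ∈ J`).  Then for each `n`, each `D n t` (`t ∈ J`) is a
continuous linear map, and for each compact `K ⊆ J` the family `{D n t}_{t ∈ K}` is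
equicontinuous. -/
theorem stmt1 {X Y : Type*}
    [AddCommGroup X] [Module ℝ X] [TopologicalSpace X] [IsTopologicalAddGroup X]
    [ContinuousSMul ℝ X] [LocallyConvexSpace ℝ X] [BarrelledSpace ℝ X]
    [AddCommGroup Y] [Module ℝ Y] [UniformSpace Y] [IsUniformAddGroup Y]
    [ContinuousSMul ℝ Y] [LocallyConvexSpace ℝ Y] [CompleteSpace Y] [T2Space Y]
    (J : Set ℝ) (hJopen : IsOpen J) (hJconn : J.OrdConnected) (hJne : J.Nonempty)
    (F : ℝ → X →L[ℝ] Y)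
    (D : ℕ → ℝ → X → Y)
    (hD0 : ∀ t x, D 0 t x = F t x)
    (hDderiv : ∀ n : ℕ, ∀ t ∈ J, ∀ x : X,
      Tendsto (fun h : ℝ => h⁻¹ • (D n (t + h) x - D n t x))
        (nhdsWithin 0 {(0 : ℝ)}ᶜ) (nhds (D (n + 1) t x))) :
    ∀ n : ℕ,
      (∀ t ∈ J, ∃ L : X →L[ℝ] Y, ∀ x : X, L x = D n t x) ∧
      (∀ K : Set ℝ, K ⊆ J → IsCompact K →
        Equicontinuous (fun t : K => D n t.1)) :=
  stmt1_general J hJopen F D hD0 hDderiv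
end

section
/- Let R be a unital commutative topological algebra, A a topological R-algebra, and M = C^∞(J,X) the module of sections of a smooth one-parameter deformation of algebras with algebra of sections A_J. If ∇ and ∇' are two connections on A_J with Hochschild 2-cocycles E = δ∇ and E' = δ∇' (where δ is the Hochschild coboundary), then E − E' = δF for the C^∞(J)-linear map F = ∇ − ∇'; hence the class [E] ∈ H²_{C^∞(J)}(A_J, A_J) is independent of the choice of connection. Moreover [E] = 0 if and only if A_J admits a connection that is a derivation. -/
/-!
With `δF (a, b) = a F(b) − F(ab) + F(a) b` the Hochschild coboundary of a 1-cochain, the cocycle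
of a connection is simply `E = δ∇`, and `δ` is additive in the cochain. The Leibniz rules of two
connections cancel in their difference, so `F = ∇ − ∇'` is `R`-linear and `E − E' = δF`.
Likewise `E = δF` with `F` linear means `δ(∇ − F) = 0`, i.e. `∇ − F` is a connection that is
a derivation; conversely a connection `D` that is a derivation gives `E = δ(∇ − D)`.
-/

structure IsConnection {R A : Type*} [Semiring R] [AddCommGroup A] [Module R A]
    (d : R → R) (D : A → A) : Prop where
  map_add : ∀ a b : A, D (a + b) = D a + D b
  map_smul : ∀ (r : R) (a : A), D (r • a) = d r • a + r • D a

namespace IsConnection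

variable {R A : Type*} [Semiring R] [AddCommGroup A] [Module R A] {d : R → R} {D D' : A → A}

theorem isLinearMap_sub (h : IsConnection d D) (h' : IsConnection d D') :
    IsLinearMap R (D - D') where
  map_add a b := by simp only [Pi.sub_apply, h.map_add, h'.map_add]; abel
  map_smul r a := by simp only [Pi.sub_apply, h.map_smul, h'.map_smul, smul_sub]; abel

theorem sub_linearMap (h : IsConnection d D) (F : A →ₗ[R] A) : IsConnection d (D - ⇑F) where
  map_add a b := by simp only [Pi.sub_apply, h.map_add, F.map_add]; abel
  map_smul r a := by simp only [Pi.sub_apply, h.map_smul, F.map_smul, smul_sub]; abel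

end IsConnection

section HochschildCoboundary

variable {A : Type*} [NonUnitalNonAssocRing A]

def hochschildCoboundary (F : A → A) (a b : A) : A := a * F b - F (a * b) + F a * b

theorem hochschildCoboundary_eq (F : A → A) (a b : A) :
    hochschildCoboundary F a b = F a * b + a * F b - F (a * b) := by
  unfold hochschildCoboundary; abel

theorem hochschildCoboundary_sub (F G : A → A) (a b : A) :
    hochschildCoboundary (F - G) a b = hochschildCoboundary F a b - hochschildCoboundary G a b := by
  simp only [hochschildCoboundary, Pi.sub_apply, mul_sub, sub_mul]; abel

theorem hochschildCoboundary_eq_zero_iff (D : A → A) (a b : A) :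
    hochschildCoboundary D a b = 0 ↔ D (a * b) = D a * b + a * D b := by
  rw [hochschildCoboundary_eq, sub_eq_zero, eq_comm]

end HochschildCoboundary

theorem stmt6_general {R A : Type*} [CommRing R] [Ring A] [Algebra R A]
    (d : R → R)
    (Del Del' : A → A)
    (hadd : ∀ a b : A, Del (a + b) = Del a + Del b)
    (hadd' : ∀ a b : A, Del' (a + b) = Del' a + Del' b)
    (hleib : ∀ (r : R) (a : A), Del (r • a) = d r • a + r • Del a)
    (hleib' : ∀ (r : R) (a : A), Del' (r • a) = d r • a + r • Del' a) :
    (IsLinearMap R (fun a => Del a - Del' a)) ∧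
    (∀ a b : A,
      (Del a * b + a * Del b - Del (a * b)) - (Del' a * b + a * Del' b - Del' (a * b))
        = a * (Del b - Del' b) - (Del (a * b) - Del' (a * b)) + (Del a - Del' a) * b) ∧
    ((∃ F : A →ₗ[R] A, ∀ a b : A,
        Del a * b + a * Del b - Del (a * b) = a * F b - F (a * b) + F a * b) ↔
      (∃ D : A → A, (∀ a b : A, D (a + b) = D a + D b) ∧
        (∀ (r : R) (a : A), D (r • a) = d r • a + r • D a) ∧
        (∀ a b : A, D (a * b) = D a * b + a * D b))) := by
  have hDel : IsConnection d Del := ⟨hadd, hleib⟩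
  have hDel' : IsConnection d Del' := ⟨hadd', hleib'⟩
  refine ⟨hDel.isLinearMap_sub hDel', fun a b => ?_,
    fun ⟨F, hF⟩ => ?_, fun ⟨D, hD_add, hD_smul, hD_mul⟩ => ?_⟩
  · simp only [← hochschildCoboundary_eq, ← hochschildCoboundary_sub]
    rfl
  · have hDF := hDel.sub_linearMap F
    refine ⟨Del - F, hDF.map_add, hDF.map_smul, fun a b => ?_⟩
    rw [← hochschildCoboundary_eq_zero_iff, hochschildCoboundary_sub, hochschildCoboundary_eq,
      hF]
    exact sub_self _
  · have hD : IsConnection d D := ⟨hD_add, hD_smul⟩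
    refine ⟨IsLinearMap.mk' _ (hDel.isLinearMap_sub hD), fun a b => ?_⟩
    have hδD := (hochschildCoboundary_eq_zero_iff D a b).mpr (hD_mul a b)
    have hδ := hochschildCoboundary_sub Del D a b
    rw [hδD, sub_zero] at hδ
    rw [← hochschildCoboundary_eq]
    exact hδ.symm

/-- Let `R` be a unital commutative (topological) algebra with derivation `d`
(modelling `C^∞(J)` with `f ↦ f'`) and let `A` be an `R`-algebra (modelling the algebra of
sections `A_J` of a smooth deformation).  A connection on `A` is an additive map `∇` with
`∇(r • a) = d r • a + r • ∇ a`; its Hochschild 2-cocycle is `E(a,b) = ∇a·b + a·∇b − ∇(ab)`.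
If `∇, ∇'` are two connections with cocycles `E, E'`, then `F := ∇ − ∇'` is `R`-linear and
`E − E' = δF`, so the class `[E] ∈ H²_R(A,A)` is independent of the connection; moreover
`[E] = 0` (i.e. `E = δF` for some `R`-linear `F`) iff `A` admits a connection that is a
derivation. -/
theorem stmt6 {R A : Type*} [CommRing R] [Ring A] [Algebra R A]
    (d : R → R) (hd_add : ∀ r s : R, d (r + s) = d r + d s)
    (hd_mul : ∀ r s : R, d (r * s) = d r * s + r * d s)
    (Del Del' : A → A)
    (hadd : ∀ a b : A, Del (a + b) = Del a + Del b)
    (hadd' : ∀ a b : A, Del' (a + b) = Del' a + Del' b)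
    (hleib : ∀ (r : R) (a : A), Del (r • a) = d r • a + r • Del a)
    (hleib' : ∀ (r : R) (a : A), Del' (r • a) = d r • a + r • Del' a) :
    (IsLinearMap R (fun a => Del a - Del' a)) ∧
    (∀ a b : A,
      (Del a * b + a * Del b - Del (a * b)) - (Del' a * b + a * Del' b - Del' (a * b))
        = a * (Del b - Del' b) - (Del (a * b) - Del' (a * b)) + (Del a - Del' a) * b) ∧
    ((∃ F : A →ₗ[R] A, ∀ a b : A,
        Del a * b + a * Del b - Del (a * b) = a * F b - F (a * b) + F a * b) ↔
      (∃ D : A → A, (∀ a b : A, D (a + b) = D a + D b) ∧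
        (∀ (r : R) (a : A), D (r • a) = d r • a + r • D a) ∧
        (∀ a b : A, D (a * b) = D a * b + a * D b))) :=
  stmt6_general d Del Del' hadd hadd' hleib hleib'
end

section
/- Let (C•, d) be a cochain complex of modules over a commutative ring R equipped with a degree-0 map ∇ on each C^n satisfying the connection Leibniz rule over C^∞(J) (or over any R with derivation), and set G := [d,∇] = d∇ − ∇d. Then G is R-linear (i.e. commutes with the module action) and [d,G] = 0, so G is a 1-cocycle in the endomorphism complex End_R(C). Moreover its cohomology class [G] ∈ H¹(End_R(C)) is independent of the choice of connection ∇, and [G] = 0 if and only if C admits a connection that is a chain map. -/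
/-! The Leibniz rule makes every commutator `f ∘ ∇ - ∇' ∘ f` with an `R`-linear map `f`, and
every difference of two connections, `R`-linear: the `d r • _` terms cancel. Since `dC² = 0`,
`[dC, [dC, ∇]] = dC ∇ dC - dC ∇ dC = 0`. Replacing `∇` by `∇ - F` for an `R`-linear family `F`
changes `G` by the coboundary `[dC, F]`, so `G` is a coboundary exactly when some connection
`∇ - F` has `[dC, ∇ - F] = 0`, i.e. is a chain map. -/

section Connection

variable {R M N : Type*} [CommRing R] [AddCommGroup M] [Module R M] [AddCommGroup N] [Module R N]

structure IsConnection_s7 (d : R → R) (D : M → M) : Prop where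
  map_add : ∀ x y, D (x + y) = D x + D y
  leibniz : ∀ (r : R) x, D (r • x) = d r • x + r • D x

namespace IsConnection_s7

variable {d : R → R} {D D' : M → M} {E : N → N}

theorem map_zero (hD : IsConnection_s7 d D) : D 0 = 0 := by
  simpa using (hD.map_add 0 0).symm

theorem isLinearMap_sub_s7 (hD : IsConnection_s7 d D) (hD' : IsConnection_s7 d D') :
    IsLinearMap R fun x => D x - D' x where
  map_add x y := by rw [hD.map_add, hD'.map_add]; abel
  map_smul r x := by rw [hD.leibniz, hD'.leibniz, smul_sub]; abel

theorem sub_linearMap_s7 (hD : IsConnection_s7 d D) (F : M →ₗ[R] M) :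
    IsConnection_s7 d fun x => D x - F x where
  map_add x y := by rw [hD.map_add, _root_.map_add]; abel
  leibniz r x := by rw [hD.leibniz, map_smul, smul_sub]; abel

theorem isLinearMap_commutator (hD : IsConnection_s7 d D) (hE : IsConnection_s7 d E)
    (f : M →ₗ[R] N) : IsLinearMap R fun x => f (D x) - E (f x) where
  map_add x y := by rw [hD.map_add, _root_.map_add, _root_.map_add, hE.map_add]; abel
  map_smul r x := by
    rw [hD.leibniz, map_smul, hE.leibniz, _root_.map_add, map_smul, map_smul, smul_sub]
    abel

end IsConnection_s7

end Connection

theorem map_sub_sub_eq_commutator_sub_commutator {M N F : Type*} [AddCommGroup M]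
    [AddCommGroup N] [FunLike F M N] [AddMonoidHomClass F M N] (f : F) (D D' : M → M)
    (E E' : N → N) (x : M) :
    f (D x - D' x) - (E (f x) - E' (f x)) = (f (D x) - E (f x)) - (f (D' x) - E' (f x)) := by
  rw [map_sub]; abel

theorem stmt7_general {R : Type*} [CommRing R] {C : ℤ → Type*}
    [∀ n, AddCommGroup (C n)] [∀ n, Module R (C n)]
    (d : R → R)
    (dC : ∀ n : ℤ, C n →ₗ[R] C (n + 1))
    (hdd : ∀ (n : ℤ) (x : C n), dC (n + 1) (dC n x) = 0)
    (Del Del' : ∀ n : ℤ, C n → C n)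
    (hadd : ∀ (n : ℤ) (x y : C n), Del n (x + y) = Del n x + Del n y)
    (hleib : ∀ (n : ℤ) (r : R) (x : C n), Del n (r • x) = d r • x + r • Del n x) :
    (∀ n : ℤ, IsLinearMap R (fun x : C n => dC n (Del n x) - Del (n + 1) (dC n x))) ∧
    (∀ (n : ℤ) (x : C n),
      dC (n + 1) (dC n (Del n x) - Del (n + 1) (dC n x))
        + (dC (n + 1) (Del (n + 1) (dC n x)) - Del (n + 1 + 1) (dC (n + 1) (dC n x))) = 0) ∧
    (∀ (n : ℤ) (x : C n),
      (dC n (Del n x) - Del (n + 1) (dC n x)) - (dC n (Del' n x) - Del' (n + 1) (dC n x))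
        = dC n (Del n x - Del' n x) - (Del (n + 1) (dC n x) - Del' (n + 1) (dC n x))) ∧
    ((∃ F : ∀ n : ℤ, C n →ₗ[R] C n, ∀ (n : ℤ) (x : C n),
        dC n (Del n x) - Del (n + 1) (dC n x) = dC n (F n x) - F (n + 1) (dC n x)) ↔
      (∃ D : ∀ n : ℤ, C n → C n,
        (∀ (n : ℤ) (x y : C n), D n (x + y) = D n x + D n y) ∧
        (∀ (n : ℤ) (r : R) (x : C n), D n (r • x) = d r • x + r • D n x) ∧
        (∀ (n : ℤ) (x : C n), dC n (D n x) = D (n + 1) (dC n x)))) := by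
  have hDel (n : ℤ) : IsConnection_s7 d (Del n) := ⟨hadd n, hleib n⟩
  refine ⟨fun n => (hDel n).isLinearMap_commutator (hDel _) (dC n), fun n x => ?_,
    fun n x => (map_sub_sub_eq_commutator_sub_commutator ..).symm, ⟨?_, ?_⟩⟩
  · rw [hdd, (hDel _).map_zero, map_sub, hdd]
    abel
  · rintro ⟨F, hF⟩
    refine ⟨fun n x => Del n x - F n x, fun n => ((hDel n).sub_linearMap_s7 (F n)).map_add,
      fun n => ((hDel n).sub_linearMap_s7 (F n)).leibniz, fun n x => ?_⟩
    rw [← sub_eq_zero, map_sub_sub_eq_commutator_sub_commutator, hF, sub_self]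
  · rintro ⟨D, hDadd, hDleib, hDchain⟩
    refine ⟨fun n => IsLinearMap.mk' _ ((hDel n).isLinearMap_sub_s7 ⟨hDadd n, hDleib n⟩),
      fun n x => ?_⟩
    rw [IsLinearMap.mk'_apply, IsLinearMap.mk'_apply, map_sub_sub_eq_commutator_sub_commutator,
      hDchain, sub_self, sub_zero]

/-- Let `R` be a commutative ring with derivation `d` (modelling `C^∞(J)` with
`f ↦ f'`), and `(C•, dC)` a cochain complex of `R`-modules.  A connection on `C•` is a family
of additive maps `∇ⁿ : Cⁿ → Cⁿ` with `∇(r • x) = d r • x + r • ∇ x`.  Set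
`G = [dC, ∇] = dC∇ − ∇dC`.  Then `G` is `R`-linear and `[dC, G] = 0`, i.e. `G` is a 1-cocycle
in the endomorphism complex; the class `[G]` is independent of `∇` (the difference of the
cocycles of two connections is the coboundary of the `R`-linear map `∇ − ∇'`), and `[G] = 0`
iff `C•` admits a connection which is a chain map. -/
theorem stmt7 {R : Type*} [CommRing R] {C : ℤ → Type*}
    [∀ n, AddCommGroup (C n)] [∀ n, Module R (C n)]
    (d : R → R) (hd_add : ∀ r s : R, d (r + s) = d r + d s)
    (hd_mul : ∀ r s : R, d (r * s) = d r * s + r * d s)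
    (dC : ∀ n : ℤ, C n →ₗ[R] C (n + 1))
    (hdd : ∀ (n : ℤ) (x : C n), dC (n + 1) (dC n x) = 0)
    (Del Del' : ∀ n : ℤ, C n → C n)
    (hadd : ∀ (n : ℤ) (x y : C n), Del n (x + y) = Del n x + Del n y)
    (hadd' : ∀ (n : ℤ) (x y : C n), Del' n (x + y) = Del' n x + Del' n y)
    (hleib : ∀ (n : ℤ) (r : R) (x : C n), Del n (r • x) = d r • x + r • Del n x)
    (hleib' : ∀ (n : ℤ) (r : R) (x : C n), Del' n (r • x) = d r • x + r • Del' n x) :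
    (∀ n : ℤ, IsLinearMap R (fun x : C n => dC n (Del n x) - Del (n + 1) (dC n x))) ∧
    (∀ (n : ℤ) (x : C n),
      dC (n + 1) (dC n (Del n x) - Del (n + 1) (dC n x))
        + (dC (n + 1) (Del (n + 1) (dC n x)) - Del (n + 1 + 1) (dC (n + 1) (dC n x))) = 0) ∧
    (∀ (n : ℤ) (x : C n),
      (dC n (Del n x) - Del (n + 1) (dC n x)) - (dC n (Del' n x) - Del' (n + 1) (dC n x))
        = dC n (Del n x - Del' n x) - (Del (n + 1) (dC n x) - Del' (n + 1) (dC n x))) ∧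
    ((∃ F : ∀ n : ℤ, C n →ₗ[R] C n, ∀ (n : ℤ) (x : C n),
        dC n (Del n x) - Del (n + 1) (dC n x) = dC n (F n x) - F (n + 1) (dC n x)) ↔
      (∃ D : ∀ n : ℤ, C n → C n,
        (∀ (n : ℤ) (x y : C n), D n (x + y) = D n x + D n y) ∧
        (∀ (n : ℤ) (r : R) (x : C n), D n (r • x) = d r • x + r • D n x) ∧
        (∀ (n : ℤ) (x : C n), dC n (D n x) = D (n + 1) (dC n x)))) :=
  stmt7_general d dC hdd Del Del' hadd hleib
end

section
/- Let A be a unital associative algebra over a commutative ring k and P ∈ A an idempotent (P² = P). Define the even chain ch P with components (ch P)₀ = P and (ch P)_{2n} = (−1)^n ((2n)!/n!) (P^{⊗(2n+1)} − (1/2) e ⊗ P^{⊗2n}) in the cyclic chain groups C_{2n}(A) = A₊ ⊗ A^{⊗2n}, where e is the unit adjoined in A₊. Then (b+B)(ch P) = 0, i.e. b((ch P)_{2(n+1)}) = −B((ch P)_{2n}) for all n ≥ 0. -/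
/-!
On a constant chain `a₀ ⊗ P ⊗ ⋯ ⊗ P` with `P` idempotent all inner faces of `b` give the same
chain; in degree `2n + 2` there are `2n + 1` of them with alternating signs, so they collapse to
one negative term. Likewise every cyclic rotation in `B(P^{⊗(2n+1)})` is `e ⊗ P^{⊗(2n+1)}` with
sign `+1`. Hence `b(P^{⊗(2n+3)}) = P^{⊗(2n+2)}`, `b(e ⊗ P^{⊗(2n+2)}) = 2 P^{⊗(2n+2)} - e ⊗ P^{⊗(2n+1)}`
and `B(P^{⊗(2n+1)}) = (2n+1) e ⊗ P^{⊗(2n+1)}`, and the claim reduces to the coefficient identity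
`chCoeff (n + 1) / 2 = -(2n+1) chCoeff n`.
-/

open scoped TensorProduct
open Finset

/-- The Hochschild/cyclic chain group `C_n(A) = A₊ ⊗ A^{⊗n}` over `k`. -/
abbrev CycChain (k A : Type*) [CommRing k] [Ring A] [Algebra k A] (n : ℕ) : Type _ :=
  Unitization k A ⊗[k] (PiTensorProduct k (fun _ : Fin n => A))

/-- The elementary chain `a₀ ⊗ f 0 ⊗ ⋯ ⊗ f (n-1)` in `C_n(A)`. -/
noncomputable def elemC (k A : Type*) [CommRing k] [Ring A] [Algebra k A] (n : ℕ)
    (a₀ : Unitization k A) (f : ℕ → A) : CycChain k A n :=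
  a₀ ⊗ₜ[k] PiTensorProduct.tprod k (fun i : Fin n => f (i : ℕ))

/-- The value of the Hochschild boundary `b` on the elementary chain
`a₀ ⊗ f 0 ⊗ ⋯ ⊗ f n` of degree `n+1`:
`b(a₀ ⊗ a₁ ⊗ ⋯ ⊗ a_{n+1}) = Σ (−1)^j (⋯ a_j a_{j+1} ⋯) + (−1)^{n+1} (a_{n+1} a₀) ⊗ ⋯`. -/
noncomputable def bElemF (k A : Type*) [CommRing k] [Ring A] [Algebra k A] (n : ℕ)
    (a₀ : Unitization k A) (f : ℕ → A) : CycChain k A n :=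
  elemC k A n (a₀ * Unitization.inr (f 0)) (fun i => f (i + 1))
  + ∑ j ∈ Finset.range n, ((-1 : ℤ) ^ (j + 1)) •
      elemC k A n a₀
        (fun i => if i < j then f i else if i = j then f j * f (j + 1) else f (i + 1))
  + ((-1 : ℤ) ^ (n + 1)) • elemC k A n (Unitization.inr (f n) * a₀) f

/-- The value of the Connes operator `B` on the elementary chain
`a₀ ⊗ f 0 ⊗ ⋯ ⊗ f (n-1)` of degree `n` (with `a₀ ∈ A`, i.e. using the `A`-component of
`a₀`; `B` vanishes on chains starting with `e`):
`B(a₀ ⊗ ⋯ ⊗ a_n) = Σ_j (−1)^{jn} e ⊗ a_j ⊗ ⋯ ⊗ a_n ⊗ a₀ ⊗ ⋯ ⊗ a_{j-1}`. -/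
noncomputable def BElemF (k A : Type*) [CommRing k] [Ring A] [Algebra k A] (n : ℕ)
    (a₀ : Unitization k A) (f : ℕ → A) : CycChain k A (n + 1) :=
  ∑ j ∈ Finset.range (n + 1), ((-1 : ℤ) ^ (j * n)) •
    elemC k A (n + 1) 1
      (fun i => (fun m => if m = 0 then a₀.snd else f (m - 1)) ((j + i) % (n + 1)))

/-- The Chern character coefficient `(−1)^n (2n)!/n!`. -/
noncomputable def chCoeff (n : ℕ) : ℚ :=
  (-1) ^ n * ((2 * n).factorial : ℚ) / (n.factorial : ℚ)

/-- The part of `(ch P)_{2n}` surviving under `B` (the `e ⊗ P^{⊗2n}` part is killed by `B`):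
for `n = 0` it is `B(P)`, and for `n ≥ 1` it is `(−1)^n ((2n)!/n!) B(P^{⊗(2n+1)})`. -/
noncomputable def chPB (k A : Type*) [CommRing k] [Algebra ℚ k] [Ring A] [Algebra k A]
    (P : A) : (n : ℕ) → CycChain k A (2 * n + 1)
  | 0 => BElemF k A 0 (Unitization.inr P) (fun _ => P)
  | (m + 1) => algebraMap ℚ k (chCoeff (m + 1)) •
      BElemF k A (2 * (m + 1)) (Unitization.inr P) (fun _ => P)

lemma sum_range_neg_one_pow_succ_two_mul_add_one (n : ℕ) :
    ∑ j ∈ range (2 * n + 1), (-1 : ℤ) ^ (j + 1) = -1 := by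
  induction n with
  | zero => simp
  | succ n ih =>
    have hsign : (-1 : ℤ) ^ (2 * n + 1 + 1) = 1 := Even.neg_one_pow ⟨n + 1, by ring⟩
    rw [show 2 * (n + 1) + 1 = 2 * n + 1 + 1 + 1 by ring, sum_range_succ, sum_range_succ, ih,
      hsign, pow_succ, hsign]
    norm_num

lemma chCoeff_succ_div_two (n : ℕ) : chCoeff (n + 1) / 2 = -((2 * n + 1 : ℚ) * chCoeff n) := by
  have hn : (n.factorial : ℚ) ≠ 0 := Nat.cast_ne_zero.mpr n.factorial_ne_zero
  rw [chCoeff, chCoeff, show 2 * (n + 1) = 2 * n + 1 + 1 by ring, Nat.factorial_succ,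
    Nat.factorial_succ, Nat.factorial_succ]
  push_cast
  field_simp
  ring

section ConstantChains

variable {k A : Type*} [CommRing k] [Ring A] [Algebra k A]

lemma bElemF_const_of_idempotent {P : A} (hP : P * P = P) (n : ℕ) (a₀ : Unitization k A) :
    bElemF k A (2 * n + 1) a₀ (fun _ => P) =
      elemC k A (2 * n + 1) (a₀ * Unitization.inr P) (fun _ => P)
        - elemC k A (2 * n + 1) a₀ (fun _ => P)
        + elemC k A (2 * n + 1) (Unitization.inr P * a₀) (fun _ => P) := by
  have hface : ∀ j : ℕ, (fun i => if i < j then P else if i = j then P * P else P) = fun _ => P :=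
    fun j => funext fun i => by split_ifs <;> simp [hP]
  have hsign : (-1 : ℤ) ^ (2 * n + 1 + 1) = 1 := Even.neg_one_pow ⟨n + 1, by ring⟩
  simp only [bElemF, hface, ← sum_smul, sum_range_neg_one_pow_succ_two_mul_add_one, hsign,
    one_smul, neg_one_smul, ← sub_eq_add_neg]

lemma BElemF_inr_const_two_mul (P : A) (n : ℕ) :
    BElemF k A (2 * n) (Unitization.inr P) (fun _ => P) =
      (2 * n + 1) • elemC k A (2 * n + 1) 1 (fun _ => P) := by
  have hsign : ∀ j : ℕ, (-1 : ℤ) ^ (j * (2 * n)) = 1 := fun j => Even.neg_one_pow ⟨j * n, by ring⟩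
  have hrot : ∀ j : ℕ, (fun i => (fun m => if m = 0 then (Unitization.inr P : Unitization k A).snd
      else P) ((j + i) % (2 * n + 1))) = fun _ => P := fun j => funext fun i => by simp
  simp only [BElemF, hsign, hrot, one_smul, sum_const, card_range]

end ConstantChains

lemma chPB_eq {k A : Type*} [CommRing k] [Algebra ℚ k] [Ring A] [Algebra k A] (P : A) (n : ℕ) :
    chPB k A P n =
      algebraMap ℚ k (chCoeff n) • BElemF k A (2 * n) (Unitization.inr P) (fun _ => P) := by
  cases n with
  | zero => simp [chPB, chCoeff]
  | succ m => rfl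

/-- For an idempotent `P` in a unital `k`-algebra `A` (`k` a commutative
`ℚ`-algebra), the even Chern character chain with components `(ch P)₀ = P` and
`(ch P)_{2n} = (−1)^n ((2n)!/n!) (P^{⊗(2n+1)} − ½ e ⊗ P^{⊗2n})` satisfies
`(b+B)(ch P) = 0`, i.e. `b((ch P)_{2(n+1)}) = −B((ch P)_{2n})` for all `n ≥ 0`. -/
theorem stmt8 {k A : Type*} [CommRing k] [Algebra ℚ k] [Ring A] [Algebra k A]
    (P : A) (hP : P * P = P) :
    ∀ n : ℕ,
      algebraMap ℚ k (chCoeff (n + 1)) •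
          bElemF k A (2 * n + 1) (Unitization.inr P) (fun _ => P)
        - algebraMap ℚ k (chCoeff (n + 1) / 2) •
          bElemF k A (2 * n + 1) 1 (fun _ => P)
        = - chPB k A P n := by
  intro n
  have hinr : (Unitization.inr P : Unitization k A) * Unitization.inr P = Unitization.inr P := by
    rw [← Unitization.inr_mul, hP]
  have hcoeff : chCoeff (n + 1) = 2 * -((2 * n + 1 : ℚ) * chCoeff n) := by
    rw [← chCoeff_succ_div_two]; ring
  rw [bElemF_const_of_idempotent hP, bElemF_const_of_idempotent hP, chPB_eq,
    BElemF_inr_const_two_mul, chCoeff_succ_div_two, hcoeff, hinr, one_mul, mul_one]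
  simp only [map_neg, map_mul, map_add, map_ofNat, map_natCast, map_one]
  module
end
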